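/- arXiv:1712.09989 — 3 statements merged into one kernel-verified Lean document; each statement's English description precedes it below -/
import Mathlib

section
/- Let G be a connected bipartite graph with e edges and n vertices, 2-cell embedded in an orientable surface with rotation system Π having f(Π) faces, and suppose f' of these faces have length at most 2i (for some integer i ≥ 2) while all other faces have length at least 2i+2 (and every face has length at least 4, since G is bipartite). Then 2e ≥ (2i+2)·f(Π) − (2i−2)·f', and consequently the genus g of the embedding satisfies g ≥ (i/(2i+2))·e − ((i−1)/(2i+2))·f' − (n−2)/2. -/
open SimpleGraph

/-- A rotation system on a simple graph (encodes a 2-cell embedding in an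
orientable surface). -/
structure RotationSystem {V : Type} (G : SimpleGraph V) where
  rot : Equiv.Perm G.Dart
  fst_rot : ∀ d : G.Dart, (rot d).toProd.1 = d.toProd.1

/-- Number of orbits of a permutation. -/
noncomputable def numOrbits {α : Type} (f : Equiv.Perm α) : ℕ :=
  Nat.card (Quotient (Equiv.Perm.SameCycle.setoid f))

/-- The size of an orbit of a permutation. -/
noncomputable def orbitSize {α : Type} (f : Equiv.Perm α)
    (c : Quotient (Equiv.Perm.SameCycle.setoid f)) : ℕ :=
  Nat.card {x : α // Quotient.mk (Equiv.Perm.SameCycle.setoid f) x = c}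

namespace RotationSystem

variable {V : Type} {G : SimpleGraph V}

/-- The face-tracing permutation of a rotation system. -/
def facePerm (ρ : RotationSystem G) : Equiv.Perm G.Dart :=
  (Function.Involutive.toPerm _ (Dart.symm_involutive (G := G))).trans ρ.rot

/-- The faces of the embedding determined by a rotation system: orbits of the
face-tracing permutation on darts. -/
def Face (ρ : RotationSystem G) : Type :=
  Quotient (Equiv.Perm.SameCycle.setoid ρ.facePerm)

/-- The number of faces of the embedding determined by a rotation system. -/
noncomputable def faceCount (ρ : RotationSystem G) : ℕ := numOrbits ρ.facePerm

/-- The length of a face: the number of darts on its boundary walk. -/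
noncomputable def faceLength (ρ : RotationSystem G) (c : ρ.Face) : ℕ :=
  orbitSize ρ.facePerm c

end RotationSystem

/-! Tracing the faces partitions the `2e` darts, so the face lengths sum to `2e`. Bounding the
`f'` short faces below by `4` and the others by `2i + 2` gives
`2e ≥ 4 f' + (2i + 2)(f - f')`, which is the first inequality; substituting
`f = 2 - 2g - n + e` from Euler's formula turns it into the genus bound. -/

open Finset

theorem sum_orbitSize_eq_card {α : Type} [Fintype α] (f : Equiv.Perm α)
    [Fintype (Quotient (Equiv.Perm.SameCycle.setoid f))] :
    ∑ c, orbitSize f c = Fintype.card α := by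
  classical
  simp only [orbitSize, Nat.card_eq_fintype_card]
  rw [← Fintype.card_sigma]
  exact Fintype.card_congr (Equiv.sigmaFiberEquiv _)

theorem Finset.mul_card_filter_add_mul_card_filter_not_le_sum {ι : Type*} (s : Finset ι)
    (w : ι → ℕ) (p : ι → Prop) [DecidablePred p] {a b : ℕ}
    (ha : ∀ x ∈ s, p x → a ≤ w x) (hb : ∀ x ∈ s, ¬ p x → b ≤ w x) :
    a * #{x ∈ s | p x} + b * #{x ∈ s | ¬ p x} ≤ ∑ x ∈ s, w x := by
  rw [← sum_filter_add_sum_filter_not s p, mul_comm a, mul_comm b, ← smul_eq_mul, ← smul_eq_mul]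
  gcongr
  · exact card_nsmul_le_sum _ _ _ fun x hx ↦ ha x (mem_filter.1 hx).1 (mem_filter.1 hx).2
  · exact card_nsmul_le_sum _ _ _ fun x hx ↦ hb x (mem_filter.1 hx).1 (mem_filter.1 hx).2

namespace RotationSystem

variable {V : Type} {G : SimpleGraph V}

instance [Finite V] (ρ : RotationSystem G) : Finite ρ.Face := by
  have := Fintype.ofFinite V
  classical
  exact Quotient.finite _

theorem faceCount_eq_card (ρ : RotationSystem G) [Fintype ρ.Face] :
    ρ.faceCount = Fintype.card ρ.Face :=
  Nat.card_eq_fintype_card (α := ρ.Face)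

theorem sum_faceLength [Fintype V] (ρ : RotationSystem G) [Fintype ρ.Face] :
    ∑ c, ρ.faceLength c = 2 * Nat.card G.edgeSet := by
  classical
  rw [Nat.card_eq_fintype_card, ← edgeFinset_card, ← dart_card_eq_twice_card_edges]
  exact @sum_orbitSize_eq_card _ _ ρ.facePerm ‹Fintype ρ.Face›

end RotationSystem

theorem face_count_genus_lower_bound_general {V : Type} [Fintype V] (G : SimpleGraph V)
    (i : ℕ)
    (ρ : RotationSystem G)
    (e n : ℕ) (he : e = Nat.card G.edgeSet)
    (hlen4 : ∀ c : ρ.Face, 4 ≤ ρ.faceLength c)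
    (hdichotomy : ∀ c : ρ.Face, ρ.faceLength c ≤ 2 * i ∨ 2 * i + 2 ≤ ρ.faceLength c)
    (f' : ℕ) (hf' : f' = Nat.card {c : ρ.Face // ρ.faceLength c ≤ 2 * i})
    (g : ℤ) (hEuler : (n : ℤ) - e + ρ.faceCount = 2 - 2 * g) :
    (2 * e : ℤ) ≥ (2 * i + 2) * ρ.faceCount - (2 * i - 2) * f' ∧
    (g : ℚ) ≥ (i : ℚ) / (2 * i + 2) * e - ((i : ℚ) - 1) / (2 * i + 2) * f'
      - ((n : ℚ) - 2) / 2 := by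
  have := Fintype.ofFinite ρ.Face
  classical
  set short : Finset ρ.Face := {c | ρ.faceLength c ≤ 2 * i}
  set long : Finset ρ.Face := {c | ¬ ρ.faceLength c ≤ 2 * i}
  have hcount : 4 * #short + (2 * i + 2) * #long ≤ 2 * e := by
    rw [he, ← ρ.sum_faceLength]
    exact univ.mul_card_filter_add_mul_card_filter_not_le_sum _ _
      (fun c _ _ ↦ hlen4 c) (fun c _ hc ↦ (hdichotomy c).resolve_left hc)
  have hsplit : #short + #long = ρ.faceCount := by
    rw [ρ.faceCount_eq_card, ← card_univ]
    exact card_filter_add_card_filter_not _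
  have hf'short : f' = #short := by
    rw [hf', Nat.card_eq_fintype_card, Fintype.card_subtype]
  have hedge : (2 * e : ℤ) ≥ (2 * i + 2) * ρ.faceCount - (2 * i - 2) * f' := by
    rw [← hsplit, hf'short]
    push_cast
    linarith [(by exact_mod_cast hcount : (4 * #short + (2 * i + 2) * #long : ℤ) ≤ 2 * e)]
  refine ⟨hedge, ?_⟩
  have hedgeQ : (2 * e : ℚ) ≥ (2 * i + 2) * ρ.faceCount - (2 * i - 2) * f' := by
    exact_mod_cast hedge
  have hEulerQ : (n : ℚ) - e + ρ.faceCount = 2 - 2 * g := by exact_mod_cast hEuler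
  rw [ge_iff_le, ← mul_le_mul_iff_of_pos_left (by positivity : (0 : ℚ) < 2 * i + 2)]
  field_simp
  linear_combination hedgeQ / 2 - (i + 1) * hEulerQ

/-- Let `G` be a connected bipartite graph with `e` edges and `n` vertices,
2-cell embedded in an orientable surface via a rotation system `Π` with
`f(Π)` faces, of which `f'` have length at most `2i` (where `i ≥ 2`), while all
other faces have length at least `2i+2`, and every face has length at least
`4`.  Then `2e ≥ (2i+2)·f(Π) − (2i−2)·f'`, and the genus `g` of the embedding
(given by Euler's formula `n − e + f = 2 − 2g`) satisfies
`g ≥ (i/(2i+2))·e − ((i−1)/(2i+2))·f' − (n−2)/2`. -/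
theorem face_count_genus_lower_bound {V : Type} [Fintype V] (G : SimpleGraph V)
    (hG : G.Connected) (hbip : G.Colorable 2) (i : ℕ) (hi : 2 ≤ i)
    (ρ : RotationSystem G)
    (e n : ℕ) (he : e = Nat.card G.edgeSet) (hn : n = Fintype.card V)
    (hlen4 : ∀ c : ρ.Face, 4 ≤ ρ.faceLength c)
    (hdichotomy : ∀ c : ρ.Face, ρ.faceLength c ≤ 2 * i ∨ 2 * i + 2 ≤ ρ.faceLength c)
    (f' : ℕ) (hf' : f' = Nat.card {c : ρ.Face // ρ.faceLength c ≤ 2 * i})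
    (g : ℤ) (hEuler : (n : ℤ) - e + ρ.faceCount = 2 - 2 * g) :
    (2 * e : ℤ) ≥ (2 * i + 2) * ρ.faceCount - (2 * i - 2) * f' ∧
    (g : ℚ) ≥ (i : ℚ) / (2 * i + 2) * e - ((i : ℚ) - 1) / (2 * i + 2) * f'
      - ((n : ℚ) - 2) / 2 :=
  face_count_genus_lower_bound_general G i ρ e n he hlen4 hdichotomy f' hf' g hEuler
end

section
/- Let l ≥ 2 and i ≥ 1 be integers, n₂ = Θ(n₁), n = √(n₁n₂), and suppose p ≪ n^{−(4i−1)/(4i+1)} and l ≤ 2i. In the random orientation digraph D of G ∈ G_{n₁,n₂,p}, the expected number of ordered pairs of vertices (u,v) joined by 8i+2 internally disjoint directed paths of length l is o(1); hence asymptotically almost surely no such pair exists. -/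
/-
First moment method. The `g = 8i+2` paths of a family of internally disjoint `u`–`v` paths of
length `l ≥ 2` use `g l` distinct edges, each with a prescribed orientation, so a fixed family
occurs with probability at most `p^{g l}`; and a family is determined by `u`, `v` and its
`g (l-1)` interior vertices. Hence the expected number of bad pairs is at most
`(n₁+n₂)^{2+g(l-1)} p^{g l} = O(n^{2+g(l-1)} p^{g l})`. Because `l ≤ 2i`, the exponent
`2 + g(l-1)` is at most `(4i-1)/(4i+1) · g l`, so this is `O((p n^{(4i-1)/(4i+1)})^{g l}) = o(1)`,
and Markov's inequality gives the almost sure statement.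
-/

open MeasureTheory Filter

instance : MeasurableSpace (Option Bool) := ⊤

/-- The measure on `Option Bool` describing one potential edge of the random
orientation digraph: with probability `1−p` the edge is absent (`none`), with
probability `p/2` it is oriented from `X` to `Y` (`some true`), and with
probability `p/2` from `Y` to `X` (`some false`). -/
noncomputable def orientBern (p : ℝ) : Measure (Option Bool) :=
  (ENNReal.ofReal (1 - p)) • Measure.dirac none
    + (ENNReal.ofReal (p / 2)) • Measure.dirac (some true)
    + (ENNReal.ofReal (p / 2)) • Measure.dirac (some false)

/-- The random orientation digraph `D` of `G ∈ G_{n₁,n₂,p}`: each edge of the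
random bipartite graph is present with probability `p` and oriented uniformly
at random, independently. -/
noncomputable def orientMeasure (n₁ n₂ : ℕ) (p : ℝ) :
    Measure (Fin n₁ × Fin n₂ → Option Bool) :=
  Measure.pi fun _ => orientBern p

/-- The arc relation of the sampled digraph on `Fin n₁ ⊕ Fin n₂`. -/
def arc {n₁ n₂ : ℕ} (ω : Fin n₁ × Fin n₂ → Option Bool) :
    Fin n₁ ⊕ Fin n₂ → Fin n₁ ⊕ Fin n₂ → Prop
  | .inl x, .inr y => ω (x, y) = some true
  | .inr y, .inl x => ω (x, y) = some false
  | _, _ => False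

/-- `P` is a family of `g` internally disjoint directed paths of length `l`
from `u` to `v` in the digraph `D`. -/
def InternallyDisjointPaths {V : Type} (D : V → V → Prop) (g l : ℕ)
    (u v : V) (P : Fin g → Fin (l + 1) → V) : Prop :=
  (∀ s, P s 0 = u ∧ P s (Fin.last l) = v ∧
      (∀ t : Fin l, D (P s t.castSucc) (P s t.succ)) ∧
      Function.Injective (P s)) ∧
    ∀ s s', s ≠ s' → ∀ t t' : Fin (l + 1),
      t ≠ 0 → t ≠ Fin.last l → t' ≠ 0 → t' ≠ Fin.last l → P s t ≠ P s' t'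

/-- The number of ordered pairs of vertices joined by `8i+2` internally
disjoint directed paths of length `l` in the sampled digraph. -/
noncomputable def badPairCount {n₁ n₂ : ℕ} (i l : ℕ)
    (ω : Fin n₁ × Fin n₂ → Option Bool) : ℕ :=
  Nat.card {uv : (Fin n₁ ⊕ Fin n₂) × (Fin n₁ ⊕ Fin n₂) //
    ∃ P : Fin (8 * i + 2) → Fin (l + 1) → Fin n₁ ⊕ Fin n₂,
      InternallyDisjointPaths (arc ω) (8 * i + 2) l uv.1 uv.2 P}


open scoped ENNReal

theorem measure_pi_forall_eq_le {ι κ α : Type*} [Fintype ι] [Fintype κ] [MeasurableSpace α]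
    (μ : ι → Measure α) [∀ j, IsProbabilityMeasure (μ j)] {e : κ → ι}
    (he : Function.Injective e) (a : κ → α) {c : ℝ≥0∞} (hc : ∀ k, μ (e k) {a k} ≤ c) :
    Measure.pi μ {ω | ∀ k, ω (e k) = a k} ≤ c ^ Fintype.card κ := by
  classical
  let S : ι → Set α := fun j => {x | ∀ k, e k = j → x = a k}
  have hS : {ω : ι → α | ∀ k, ω (e k) = a k} = Set.univ.pi S := by
    ext ω
    simp only [Set.mem_univ_pi, S]
    exact ⟨fun h j k hk => hk ▸ h k, fun h k => h (e k) k rfl⟩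
  have hS_le : ∀ j, μ j (S j) ≤ if j ∈ Finset.univ.image e then c else 1 := by
    intro j
    split_ifs with hj
    · obtain ⟨k, -, rfl⟩ := Finset.mem_image.1 hj
      refine (measure_mono fun x hx => ?_).trans (hc k)
      exact hx k rfl
    · exact prob_le_one
  calc Measure.pi μ {ω | ∀ k, ω (e k) = a k} = ∏ j, μ j (S j) := by rw [hS, Measure.pi_pi]
    _ ≤ ∏ j, if j ∈ Finset.univ.image e then c else 1 := Finset.prod_le_prod' fun j _ => hS_le j
    _ = c ^ Fintype.card κ := by
      rw [Finset.prod_ite_mem, Finset.univ_inter, Finset.prod_const,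
        Finset.card_image_of_injective _ he, Finset.card_univ]

theorem lintegral_card_le {Ω X : Type*} [MeasurableSpace Ω] [Fintype X] (μ : Measure Ω)
    {E : X → Set Ω} (hE : ∀ x, MeasurableSet (E x)) {c : ℝ≥0∞} (hc : ∀ x, μ (E x) ≤ c) :
    ∫⁻ ω, (Nat.card {x // ω ∈ E x} : ℝ≥0∞) ∂μ ≤ Fintype.card X * c := by
  classical
  have hcard : ∀ ω, (Nat.card {x // ω ∈ E x} : ℝ≥0∞) = ∑ x, (E x).indicator 1 ω := by
    intro ω
    simp [Nat.card_eq_fintype_card, Fintype.card_subtype, Set.indicator_apply, Finset.sum_boole]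
  simp_rw [hcard]
  rw [lintegral_finsetSum _ fun x _ => measurable_one.indicator (hE x)]
  calc ∑ x, ∫⁻ ω, (E x).indicator 1 ω ∂μ = ∑ x, μ (E x) := by
        simp_rw [lintegral_indicator_one (hE _)]
    _ ≤ ∑ _x : X, c := Finset.sum_le_sum fun x _ => hc x
    _ = Fintype.card X * c := by rw [Finset.sum_const, Finset.card_univ, nsmul_eq_mul]

theorem Fin.exists_mem_sym2_ne_zero_ne_last {l : ℕ} (hl : 2 ≤ l) (t : Fin l) :
    ∃ x ∈ s(t.castSucc, t.succ), x ≠ 0 ∧ x ≠ Fin.last l := by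
  by_cases ht : (t : ℕ) = 0
  · refine ⟨t.succ, Sym2.mem_mk_right _ _, Fin.succ_ne_zero t, ?_⟩
    rw [Ne, Fin.ext_iff, Fin.val_succ, Fin.val_last]
    omega
  · refine ⟨t.castSucc, Sym2.mem_mk_left _ _, ?_, Fin.castSucc_ne_last t⟩
    rwa [Ne, Fin.ext_iff, Fin.val_castSucc, Fin.val_zero]

theorem Fin.sym2_castSucc_succ_injective (l : ℕ) :
    Function.Injective fun t : Fin l => s(t.castSucc, t.succ) := by
  intro t t' h
  rw [Sym2.eq_iff] at h
  simp only [Fin.ext_iff, Fin.val_castSucc, Fin.val_succ] at h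
  omega

def interiorVertices {V : Type} {g l : ℕ} (P : Fin g → Fin (l + 1) → V) :
    Fin g → Fin (l - 1) → V :=
  fun s t => P s ⟨t + 1, by omega⟩

namespace InternallyDisjointPaths

variable {V : Type} {D : V → V → Prop} {g l : ℕ} {u v : V} {P : Fin g → Fin (l + 1) → V}

theorem eq_of_apply_eq (hP : InternallyDisjointPaths D g l u v P) {s s' : Fin g}
    {x y : Fin (l + 1)} (hx0 : x ≠ 0) (hxl : x ≠ Fin.last l) (h : P s x = P s' y) : s = s' := by
  by_contra hs
  by_cases hy0 : y = 0
  · rw [hy0, (hP.1 s').1, ← (hP.1 s).1] at h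
    exact hx0 ((hP.1 s).2.2.2 h)
  by_cases hyl : y = Fin.last l
  · rw [hyl, (hP.1 s').2.1, ← (hP.1 s).2.1] at h
    exact hxl ((hP.1 s).2.2.2 h)
  exact hP.2 s s' hs x y hx0 hxl hy0 hyl h

/-- Since `2 ≤ l`, every arc has an internal endpoint, which pins down its path. -/
theorem edge_injective (hP : InternallyDisjointPaths D g l u v P) (hl : 2 ≤ l) :
    Function.Injective fun st : Fin g × Fin l => s(P st.1 st.2.castSucc, P st.1 st.2.succ) := by
  rintro ⟨s, t⟩ ⟨s', t'⟩ h
  simp only [← Sym2.map_mk] at h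
  obtain ⟨x, hx, hx0, hxl⟩ := Fin.exists_mem_sym2_ne_zero_ne_last hl t
  obtain ⟨y, -, hy⟩ := Sym2.mem_map.1 (h ▸ Sym2.mem_map.2 ⟨x, hx, rfl⟩ :
    P s x ∈ Sym2.map (P s') s(t'.castSucc, t'.succ))
  obtain rfl := hP.eq_of_apply_eq hx0 hxl hy.symm
  exact Prod.ext rfl (Fin.sym2_castSucc_succ_injective l (Sym2.map.injective (hP.1 s).2.2.2 h))

theorem eq_of_interiorVertices_eq {D' : V → V → Prop} {P' : Fin g → Fin (l + 1) → V}
    (hP : InternallyDisjointPaths D g l u v P) (hP' : InternallyDisjointPaths D' g l u v P')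
    (h : interiorVertices P = interiorVertices P') : P = P' := by
  funext s x
  by_cases hx0 : x = 0
  · rw [hx0, (hP.1 s).1, (hP'.1 s).1]
  by_cases hxl : x = Fin.last l
  · rw [hxl, (hP.1 s).2.1, (hP'.1 s).2.1]
  rw [Fin.ext_iff, Fin.val_zero] at hx0
  rw [Fin.ext_iff, Fin.val_last] at hxl
  have hx : x = ⟨(x - 1 : ℕ) + 1, by omega⟩ := by ext; simp only; omega
  rw [hx]
  exact congrFun (congrFun h s) ⟨x - 1, by omega⟩

end InternallyDisjointPaths

instance : DiscreteMeasurableSpace (Option Bool) := ⟨fun _ => trivial⟩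

theorem isProbabilityMeasure_orientBern {p : ℝ} (hp0 : 0 ≤ p) (hp1 : p ≤ 1) :
    IsProbabilityMeasure (orientBern p) := by
  constructor
  simp only [orientBern, Measure.add_apply, Measure.smul_apply, measure_univ, smul_eq_mul, mul_one]
  rw [← ENNReal.ofReal_add (by linarith) (by linarith),
    ← ENNReal.ofReal_add (by linarith) (by linarith), ← ENNReal.ofReal_one]
  congr 1
  ring

theorem orientBern_singleton_some_le {p : ℝ} (hp0 : 0 ≤ p) (b : Bool) :
    orientBern p {some b} ≤ ENNReal.ofReal p := by
  cases b <;> simp [orientBern] <;>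
    exact ENNReal.ofReal_le_ofReal (by linarith)

theorem exists_eq_some_of_arc {n₁ n₂ : ℕ} {ω : Fin n₁ × Fin n₂ → Option Bool}
    {a b : Fin n₁ ⊕ Fin n₂} (h : arc ω a b) :
    ∃ (e : Fin n₁ × Fin n₂) (o : Bool), s(a, b) = s(.inl e.1, .inr e.2) ∧
      ∀ ω' : Fin n₁ × Fin n₂ → Option Bool, arc ω' a b → ω' e = some o := by
  match a, b, h with
  | .inl x, .inr y, _ => exact ⟨(x, y), true, rfl, fun _ h' => h'⟩
  | .inr y, .inl x, _ => exact ⟨(x, y), false, Sym2.eq_swap, fun _ h' => h'⟩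

theorem InternallyDisjointPaths.exists_injective_forall_eq_some {n₁ n₂ g l : ℕ}
    {u v : Fin n₁ ⊕ Fin n₂} {P : Fin g → Fin (l + 1) → Fin n₁ ⊕ Fin n₂}
    {ω₀ : Fin n₁ × Fin n₂ → Option Bool} (hP : InternallyDisjointPaths (arc ω₀) g l u v P)
    (hl : 2 ≤ l) :
    ∃ (e : Fin g × Fin l → Fin n₁ × Fin n₂) (o : Fin g × Fin l → Bool),
      Function.Injective e ∧ ∀ ω, InternallyDisjointPaths (arc ω) g l u v P →
        ∀ st, ω (e st) = some (o st) := by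
  choose e o he using fun st : Fin g × Fin l => exists_eq_some_of_arc ((hP.1 st.1).2.2.1 st.2)
  refine ⟨e, o, fun st st' h => hP.edge_injective hl ?_, fun ω hω st => ?_⟩
  · simp only [(he st).1, (he st').1, h]
  · exact (he st).2 ω ((hω.1 st.1).2.2.1 st.2)

theorem orientMeasure_exists_paths_le {n₁ n₂ g l : ℕ} (hl : 2 ≤ l) {p : ℝ} (hp0 : 0 ≤ p)
    (hp1 : p ≤ 1) (u v : Fin n₁ ⊕ Fin n₂) (Q : Fin g → Fin (l - 1) → Fin n₁ ⊕ Fin n₂) :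
    orientMeasure n₁ n₂ p
        {ω | ∃ P, InternallyDisjointPaths (arc ω) g l u v P ∧ interiorVertices P = Q}
      ≤ ENNReal.ofReal p ^ (g * l) := by
  rcases Set.eq_empty_or_nonempty
      {ω | ∃ P, InternallyDisjointPaths (arc ω) g l u v P ∧ interiorVertices P = Q}
    with hE | ⟨ω₀, P₀, hP₀, hQ₀⟩
  · simp [hE]
  obtain ⟨e, o, he, hforced⟩ := hP₀.exists_injective_forall_eq_some hl
  have := isProbabilityMeasure_orientBern hp0 hp1
  calc _ ≤ orientMeasure n₁ n₂ p {ω | ∀ st, ω (e st) = some (o st)} := by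
        refine measure_mono fun ω ⟨P, hP, hQ⟩ => ?_
        obtain rfl := hP.eq_of_interiorVertices_eq hP₀ (hQ.trans hQ₀.symm)
        exact hforced ω hP
    _ ≤ ENNReal.ofReal p ^ Fintype.card (Fin g × Fin l) :=
        measure_pi_forall_eq_le _ he _ fun st => orientBern_singleton_some_le hp0 (o st)
    _ = ENNReal.ofReal p ^ (g * l) := by rw [Fintype.card_prod, Fintype.card_fin, Fintype.card_fin]

theorem badPairCount_le_card {n₁ n₂ : ℕ} (i l : ℕ) (ω : Fin n₁ × Fin n₂ → Option Bool) :
    badPairCount i l ω ≤ Nat.card {x : ((Fin n₁ ⊕ Fin n₂) × (Fin n₁ ⊕ Fin n₂)) ×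
        (Fin (8 * i + 2) → Fin (l - 1) → Fin n₁ ⊕ Fin n₂) //
      ∃ P, InternallyDisjointPaths (arc ω) (8 * i + 2) l x.1.1 x.1.2 P ∧
        interiorVertices P = x.2} :=
  Nat.card_le_card_of_injective
    (fun uv => ⟨(uv.1, interiorVertices uv.2.choose), uv.2.choose, uv.2.choose_spec, rfl⟩)
    fun _ _ h => Subtype.ext (congrArg (fun x => x.1.1) h)

theorem lintegral_badPairCount_le {n₁ n₂ : ℕ} (i : ℕ) {l : ℕ} (hl : 2 ≤ l) {p : ℝ}
    (hp0 : 0 ≤ p) (hp1 : p ≤ 1) :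
    ∫⁻ ω, (badPairCount i l ω : ℝ≥0∞) ∂orientMeasure n₁ n₂ p
      ≤ ((n₁ + n₂ : ℕ) : ℝ≥0∞) ^ (2 + (8 * i + 2) * (l - 1))
          * ENNReal.ofReal p ^ ((8 * i + 2) * l) := by
  calc _ ≤ _ := lintegral_mono fun ω => Nat.cast_le.2 (badPairCount_le_card i l ω)
    _ ≤ _ := lintegral_card_le _ (fun _ => MeasurableSet.of_discrete)
        fun x => orientMeasure_exists_paths_le hl hp0 hp1 x.1.1 x.1.2 x.2
    _ = _ := by
      simp only [Fintype.card_prod, Fintype.card_fun, Fintype.card_sum, Fintype.card_fin]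
      push_cast
      ring

theorem add_le_mul_sqrt_mul {a b c : ℝ} (ha : 0 ≤ a) (hc : 0 ≤ c) (hab : a ≤ c * b)
    (hba : b ≤ c * a) : a + b ≤ (1 + c) * √c * √(a * b) := by
  have ha' : a ≤ √c * √(a * b) :=
    calc a = √(a ^ 2) := (Real.sqrt_sq ha).symm
      _ ≤ √(c * (a * b)) := Real.sqrt_le_sqrt (by nlinarith)
      _ = √c * √(a * b) := Real.sqrt_mul hc _
  nlinarith [mul_le_mul_of_nonneg_left ha' hc]

theorem add_pow_mul_pow_le {a b c p α : ℝ} {A m : ℕ} (ha : 1 ≤ a) (hb : 1 ≤ b) (hc : 0 ≤ c)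
    (hab : a ≤ c * b) (hba : b ≤ c * a) (hp : 0 ≤ p) (hA : (A : ℝ) ≤ α * m) :
    (a + b) ^ A * p ^ m ≤ ((1 + c) * √c) ^ A * (p * √(a * b) ^ α) ^ m := by
  have hn : 1 ≤ √(a * b) := Real.one_le_sqrt.2 (by nlinarith)
  calc (a + b) ^ A * p ^ m ≤ ((1 + c) * √c * √(a * b)) ^ A * p ^ m := by
        gcongr
        exact add_le_mul_sqrt_mul (by linarith) hc hab hba
    _ = ((1 + c) * √c) ^ A * (√(a * b) ^ (A : ℝ) * p ^ m) := by
        rw [Real.rpow_natCast, mul_pow]; ring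
    _ ≤ ((1 + c) * √c) ^ A * (√(a * b) ^ (α * m) * p ^ m) := by
        gcongr
    _ = ((1 + c) * √c) ^ A * (p * √(a * b) ^ α) ^ m := by
        rw [Real.rpow_mul_natCast (by positivity)]; ring

theorem tendsto_add_pow_mul_pow_atTop_nhds_zero {a b p : ℕ → ℝ} {c α : ℝ} {A m : ℕ}
    (hm : m ≠ 0) (hA : (A : ℝ) ≤ α * m) (hc : 0 ≤ c) (hab : ∀ k, a k ≤ c * b k ∧ b k ≤ c * a k)
    (h1 : ∀ᶠ k in atTop, 1 ≤ a k ∧ 1 ≤ b k) (hp : ∀ k, 0 ≤ p k)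
    (hlim : Tendsto (fun k => p k * √(a k * b k) ^ α) atTop (nhds 0)) :
    Tendsto (fun k => (a k + b k) ^ A * p k ^ m) atTop (nhds 0) := by
  have hK := (hlim.pow m).const_mul (((1 + c) * √c) ^ A)
  rw [zero_pow hm, mul_zero] at hK
  refine squeeze_zero' ?_ ?_ hK
  · filter_upwards [h1] with k hk
    have := hp k
    have : 0 ≤ a k + b k := by linarith
    positivity
  · filter_upwards [h1] with k hk
    exact add_pow_mul_pow_le hk.1 hk.2 hc (hab k).1 (hab k).2 (hp k) hA

theorem two_add_mul_sub_one_le {i l : ℕ} (hl1 : 1 ≤ l) (hl : l ≤ 2 * i) :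
    ((2 + (8 * i + 2) * (l - 1) : ℕ) : ℝ)
      ≤ (4 * (i : ℝ) - 1) / (4 * i + 1) * ((8 * i + 2) * l : ℕ) := by
  have h : (4 * (i : ℝ) - 1) / (4 * i + 1) * ((8 * i + 2) * l : ℕ) = 2 * l * (4 * i - 1) := by
    push_cast
    field_simp
    ring
  have hl' : (l : ℝ) ≤ 2 * i := by exact_mod_cast hl
  rw [h]
  push_cast [Nat.cast_sub hl1]
  nlinarith

theorem no_many_disjoint_paths_general (i l : ℕ) (hl2 : 2 ≤ l)
    (hl : l ≤ 2 * i)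
    (n₁ n₂ : ℕ → ℕ) (p : ℕ → ℝ) (hp : ∀ k, 0 ≤ p k ∧ p k ≤ 1)
    (hΘ : ∃ c : ℝ, 0 < c ∧ ∀ k, (n₁ k : ℝ) ≤ c * n₂ k ∧ (n₂ k : ℝ) ≤ c * n₁ k)
    (hn₁ : Tendsto n₁ atTop atTop)
    (hpsmall : Tendsto
      (fun k => p k * Real.sqrt ((n₁ k : ℝ) * n₂ k)
          ^ ((4 * (i : ℝ) - 1) / (4 * i + 1)))
      atTop (nhds 0)) :
    Tendsto
      (fun k => ∫ ω, (badPairCount i l ω : ℝ) ∂(orientMeasure (n₁ k) (n₂ k) (p k)))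
      atTop (nhds 0) ∧
    Tendsto
      (fun k => orientMeasure (n₁ k) (n₂ k) (p k) {ω | 1 ≤ badPairCount i l ω})
      atTop (nhds 0) := by
  obtain ⟨c, hc, hcn⟩ := hΘ
  have hpos : ∀ᶠ k in atTop, 1 ≤ (n₁ k : ℝ) ∧ 1 ≤ (n₂ k : ℝ) := by
    filter_upwards [hn₁.eventually_ge_atTop 1] with k hk
    have h₁ : (1 : ℝ) ≤ n₁ k := by exact_mod_cast hk
    have h₂ : (0 : ℝ) < n₂ k := by nlinarith [(hcn k).1]
    exact ⟨h₁, Nat.one_le_cast.2 (Nat.cast_pos.1 h₂)⟩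
  have hbound := tendsto_add_pow_mul_pow_atTop_nhds_zero (by positivity)
    (two_add_mul_sub_one_le (by omega) hl) hc.le hcn hpos (fun k => (hp k).1) hpsmall
  have hmean : Tendsto (fun k => ∫⁻ ω, (badPairCount i l ω : ℝ≥0∞)
      ∂orientMeasure (n₁ k) (n₂ k) (p k)) atTop (nhds 0) := by
    refine tendsto_of_tendsto_of_tendsto_of_le_of_le tendsto_const_nhds
      (by simpa using ENNReal.tendsto_ofReal hbound) (fun _ => zero_le) fun k => ?_
    refine (lintegral_badPairCount_le i hl2 (hp k).1 (hp k).2).trans_eq ?_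
    rw [ENNReal.ofReal_mul (by positivity), ENNReal.ofReal_pow (by positivity),
      ENNReal.ofReal_pow (hp k).1]
    norm_cast
  constructor
  · refine ((ENNReal.tendsto_toReal ENNReal.zero_ne_top).comp hmean).congr fun k => ?_
    rw [integral_eq_lintegral_of_nonneg_ae (.of_forall fun _ => Nat.cast_nonneg _)
      Measurable.of_discrete.aestronglyMeasurable]
    simp
  · refine tendsto_of_tendsto_of_tendsto_of_le_of_le tendsto_const_nhds hmean
      (fun _ => zero_le) fun k => ?_
    simpa using mul_meas_ge_le_lintegral₀
      (Measurable.of_discrete (f := fun ω => (badPairCount i l ω : ℝ≥0∞))).aemeasurable 1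

/-- Let `l ≥ 2`, `i ≥ 1`, `n₂ = Θ(n₁)`, `n = √(n₁n₂)`, `l ≤ 2i` and
`p ≪ n^{−(4i−1)/(4i+1)}`.  In the random orientation digraph of
`G ∈ G_{n₁,n₂,p}`, the expected number of ordered pairs of vertices joined by
`8i+2` internally disjoint directed paths of length `l` is `o(1)`; hence a.a.s.
no such pair exists. -/
theorem no_many_disjoint_paths (i l : ℕ) (hi : 1 ≤ i) (hl2 : 2 ≤ l)
    (hl : l ≤ 2 * i)
    (n₁ n₂ : ℕ → ℕ) (p : ℕ → ℝ) (hp : ∀ k, 0 ≤ p k ∧ p k ≤ 1)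
    (hΘ : ∃ c : ℝ, 0 < c ∧ ∀ k, (n₁ k : ℝ) ≤ c * n₂ k ∧ (n₂ k : ℝ) ≤ c * n₁ k)
    (hn₁ : Tendsto n₁ atTop atTop)
    (hpsmall : Tendsto
      (fun k => p k * Real.sqrt ((n₁ k : ℝ) * n₂ k)
          ^ ((4 * (i : ℝ) - 1) / (4 * i + 1)))
      atTop (nhds 0)) :
    Tendsto
      (fun k => ∫ ω, (badPairCount i l ω : ℝ) ∂(orientMeasure (n₁ k) (n₂ k) (p k)))
      atTop (nhds 0) ∧
    Tendsto
      (fun k => orientMeasure (n₁ k) (n₂ k) (p k) {ω | 1 ≤ badPairCount i l ω})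
      atTop (nhds 0) :=
  no_many_disjoint_paths_general i l hl2 hl n₁ n₂ p hp hΘ hn₁ hpsmall
end

section
/- For fixed n₂ ≥ 4 and p ∈ (0,1), the quantity Ψ(p, n₂) = Σ_{i=2}^{n₂−1} ((i−1)/(i+1))·C(n₂−1, i)·(−p)^i is strictly positive, and as p → 0 it satisfies Ψ(p, n₂) = (1/3)·C(n₂−1,2)·p² + O(p³); in particular n₂p·Ψ(p,n₂) = (1+o(1))·p³·n₂·(n₂−1)(n₂−2)/6 = (1+o(1))·p³·C(n₂,3) as p → 0. -/
open Filter

open Finset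

lemma binom_sum (x : ℝ) (n : ℕ) :
    ∑ k ∈ range (n+1), (n.choose k : ℝ) * x ^ k = (x + 1) ^ n := by
  rw [add_pow]
  exact Finset.sum_congr rfl fun k _ => by ring

lemma binom_sum_mul (x : ℝ) (n : ℕ) :
    ∑ k ∈ range (n+1), (k : ℝ) * (n.choose k : ℝ) * x ^ k
      = (n : ℝ) * x * (x + 1) ^ (n - 1) := by
  cases n with
  | zero => simp
  | succ m =>
    rw [Finset.sum_range_succ']
    have step : ∀ j ∈ range (m+1),
        ((j+1 : ℕ) : ℝ) * (((m+1).choose (j+1) : ℕ) : ℝ) * x ^ (j+1)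
          = ((m:ℝ)+1) * x * ((m.choose j : ℝ) * x ^ j) := by
      intro j _
      have h' : ((m:ℝ)+1) * (m.choose j : ℝ) = ((m+1).choose (j+1) : ℝ) * ((j:ℝ)+1) := by
        exact_mod_cast congrArg (Nat.cast : ℕ → ℝ) (Nat.add_one_mul_choose_eq m j)
      push_cast
      linear_combination (-(x ^ (j+1))) * h'
    rw [Finset.sum_congr rfl step, ← Finset.mul_sum, binom_sum]
    push_cast
    ring


/-- `Ψ(p, n₂) = Σ_{i=2}^{n₂−1} ((i−1)/(i+1))·C(n₂−1, i)·(−p)^i`, the factor in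
the a.a.s. genus formula for random bipartite graphs with one constant part. -/
noncomputable def Psi (p : ℝ) (n₂ : ℕ) : ℝ :=
  ∑ i ∈ Finset.Icc 2 (n₂ - 1),
    ((i : ℝ) - 1) / ((i : ℝ) + 1) * ((n₂ - 1).choose i : ℝ) * (-p) ^ i

lemma Psi_key (n : ℕ) (hn : 4 ≤ n) (p : ℝ) :
    (n : ℝ) * p * Psi p n
      = p * ∑ j ∈ range n, (1 - (1-p)^j) * (1 - (1-p)^(n-1-j)) := by
  have hm : (n - 1) + 1 = n := by omega
  -- Step A
  have stepA : (n : ℝ) * Psi p n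
      = ∑ i ∈ Icc 2 (n-1), ((i:ℝ) - 1) * (n.choose (i+1) : ℝ) * (-p) ^ i := by
    unfold Psi
    rw [Finset.mul_sum]
    refine Finset.sum_congr rfl fun i _ => ?_
    have hnat : ((n-1) + 1) * (n-1).choose i = ((n-1)+1).choose (i+1) * (i+1) :=
      Nat.add_one_mul_choose_eq (n-1) i
    rw [hm] at hnat
    have h' : (n : ℝ) * ((n-1).choose i : ℝ) = (n.choose (i+1) : ℝ) * ((i:ℝ)+1) := by
      exact_mod_cast congrArg (Nat.cast : ℕ → ℝ) hnat
    have hip : (i:ℝ) + 1 ≠ 0 := by positivity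
    field_simp
    linear_combination ((i:ℝ) - 1) * (-p)^i * h'
  -- Step B
  have stepB : (-p) * ((n : ℝ) * Psi p n)
      = ∑ k ∈ Icc 3 n, ((k:ℝ) - 2) * (n.choose k : ℝ) * (-p) ^ k := by
    rw [stepA, Finset.mul_sum]
    refine Finset.sum_nbij' (fun i => i + 1) (fun k => k - 1) ?_ ?_ ?_ ?_ ?_
    · intro a ha; simp only [mem_Icc] at *; omega
    · intro a ha; simp only [mem_Icc] at *; omega
    · intro a _; omega
    · intro a ha; simp only [mem_Icc] at ha; omega
    · intro a _
      push_cast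
      ring
  -- Step C : full binomial sum
  have hsplit : Icc 0 n = insert 0 (insert 1 (insert 2 (Icc 3 n))) := by
    ext k; simp only [mem_Icc, mem_insert]; omega
  have hfull : ∑ k ∈ range (n+1), ((k:ℝ) - 2) * (n.choose k : ℝ) * (-p) ^ k
      = (n:ℝ) * (-p) * (-p+1) ^ (n-1) - 2 * (-p+1) ^ n := by
    have : ∀ k ∈ range (n+1), ((k:ℝ) - 2) * (n.choose k : ℝ) * (-p) ^ k
        = (k:ℝ) * (n.choose k : ℝ) * (-p)^k - 2 * ((n.choose k : ℝ) * (-p)^k) := by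
      intro k _; ring
    rw [Finset.sum_congr rfl this, Finset.sum_sub_distrib, binom_sum_mul, ← Finset.mul_sum,
      binom_sum]
  have hrange : range (n+1) = Icc 0 n := by
    rw [Finset.range_eq_Ico, Finset.Ico_add_one_right_eq_Icc]
  have stepC : ∑ k ∈ Icc 3 n, ((k:ℝ) - 2) * (n.choose k : ℝ) * (-p) ^ k
      = (n:ℝ) * (-p) * (1-p) ^ (n-1) - 2 * (1-p) ^ n + 2 - (n:ℝ) * p := by
    have h2 : (2:ℕ) ∉ Icc 3 n := by simp
    have h1 : (1:ℕ) ∉ insert 2 (Icc 3 n) := by simp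
    have h0 : (0:ℕ) ∉ insert 1 (insert 2 (Icc 3 n)) := by simp
    have := hfull
    rw [hrange, hsplit, Finset.sum_insert h0, Finset.sum_insert h1, Finset.sum_insert h2] at this
    simp only [Nat.cast_zero, Nat.cast_one, Nat.cast_ofNat, Nat.choose_zero_right,
      Nat.choose_one_right, pow_zero, pow_one] at this
    have hq : (-p + 1) = (1 - p) := by ring
    rw [hq] at this
    norm_num at this
    linarith [this]
  -- Step E : geometric side
  have hgeom : p * ∑ j ∈ range n, (1-p) ^ j = 1 - (1-p) ^ n := by
    have := geom_sum_mul (1-p) n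
    linear_combination -this
  have stepE : p * ∑ j ∈ range n, (1 - (1-p)^j) * (1 - (1-p)^(n-1-j))
      = (n:ℝ) * p + (n:ℝ) * p * (1-p)^(n-1) - 2 * (1 - (1-p)^n) := by
    have hterm : ∀ j ∈ range n, (1 - (1-p)^j) * (1 - (1-p)^(n-1-j))
        = 1 + (1-p)^(n-1) - (1-p)^j - (1-p)^(n-1-j) := by
      intro j hj
      simp only [mem_range] at hj
      have : (1-p)^j * (1-p)^(n-1-j) = (1-p)^(n-1) := by
        rw [← pow_add]; congr 1; omega
      linear_combination this
    rw [Finset.sum_congr rfl hterm]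
    have hrefl : ∑ j ∈ range n, (1-p) ^ (n-1-j) = ∑ j ∈ range n, (1-p) ^ j :=
      Finset.sum_range_reflect (fun j => (1-p)^j) n
    simp only [Finset.sum_add_distrib, Finset.sum_sub_distrib, Finset.sum_const,
      Finset.card_range, nsmul_eq_mul, hrefl]
    linear_combination (-2 : ℝ) * hgeom
  rw [stepE]
  rw [stepC] at stepB
  linear_combination (-1:ℝ) * stepB

lemma Psi_split (n : ℕ) (hn : 4 ≤ n) (p : ℝ) :
    Psi p n = 1/3 * ((n-1).choose 2 : ℝ) * p^2
      + p^3 * ∑ i ∈ Icc 3 (n-1),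
          ((i:ℝ)-1) / ((i:ℝ)+1) * ((n-1).choose i : ℝ) * (-1:ℝ)^i * p^(i-3) := by
  unfold Psi
  have hins : Icc 2 (n-1) = insert 2 (Icc 3 (n-1)) := by
    ext k; simp only [mem_Icc, mem_insert]; omega
  have h2 : (2:ℕ) ∉ Icc 3 (n-1) := by simp
  rw [hins, Finset.sum_insert h2, Finset.mul_sum]
  have hterm : ∀ i ∈ Icc 3 (n-1),
      ((i:ℝ)-1) / ((i:ℝ)+1) * ((n-1).choose i : ℝ) * (-p) ^ i
        = p^3 * (((i:ℝ)-1) / ((i:ℝ)+1) * ((n-1).choose i : ℝ) * (-1:ℝ)^i * p^(i-3)) := by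
    intro i hi
    simp only [mem_Icc] at hi
    have hp : (-p) ^ i = (-1:ℝ)^i * p ^ i := by rw [neg_pow]
    have hpow : p ^ i = p^3 * p^(i-3) := by rw [← pow_add]; congr 1; omega
    rw [hp, hpow]; ring
  rw [Finset.sum_congr rfl hterm]
  norm_num

/-- For fixed `n₂ ≥ 4` and `p ∈ (0,1)`, the quantity `Ψ(p,n₂)` is strictly
positive; as `p → 0⁺` it satisfies `Ψ(p,n₂) = (1/3)·C(n₂−1,2)·p² + O(p³)`, and
in particular `n₂p·Ψ(p,n₂) = (1+o(1))·p³·C(n₂,3)`. -/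
theorem Psi_positive_and_asymptotics (n₂ : ℕ) (hn₂ : 4 ≤ n₂) :
    (∀ p : ℝ, 0 < p → p < 1 → 0 < Psi p n₂) ∧
    (fun p : ℝ => Psi p n₂ - 1 / 3 * ((n₂ - 1).choose 2 : ℝ) * p ^ 2)
      =O[nhdsWithin 0 (Set.Ioi 0)] (fun p : ℝ => p ^ 3) ∧
    Tendsto (fun p : ℝ => (n₂ : ℝ) * p * Psi p n₂ / (p ^ 3 * (n₂.choose 3 : ℝ)))
      (nhdsWithin 0 (Set.Ioi 0)) (nhds 1) ∧
    Tendsto (fun p : ℝ => (n₂ : ℝ) * p * Psi p n₂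
        / (p ^ 3 * ((n₂ : ℝ) * ((n₂ : ℝ) - 1) * ((n₂ : ℝ) - 2) / 6)))
      (nhdsWithin 0 (Set.Ioi 0)) (nhds 1) := by
  set h : ℝ → ℝ := fun p => ∑ i ∈ Icc 3 (n₂-1),
      ((i:ℝ)-1) / ((i:ℝ)+1) * ((n₂-1).choose i : ℝ) * (-1:ℝ)^i * p^(i-3) with hh
  have hcont : Continuous h := by
    apply continuous_finset_sum
    intro i _
    exact (continuous_const.mul (continuous_pow _))
  have hfactor : ∀ p : ℝ, Psi p n₂ = 1/3 * ((n₂-1).choose 2 : ℝ) * p^2 + p^3 * h p :=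
    fun p => Psi_split n₂ hn₂ p
  -- positivity
  have pos : ∀ p : ℝ, 0 < p → p < 1 → 0 < Psi p n₂ := by
    intro p hp0 hp1
    have hq0 : (0:ℝ) ≤ 1 - p := by linarith
    have hq1 : 1 - p < 1 := by linarith
    have hkey := Psi_key n₂ hn₂ p
    have hsum : 0 < ∑ j ∈ range n₂, (1 - (1-p)^j) * (1 - (1-p)^(n₂-1-j)) := by
      apply Finset.sum_pos'
      · intro j _
        have h1 : (1-p)^j ≤ 1 := pow_le_one₀ hq0 hq1.le
        have h2 : (1-p)^(n₂-1-j) ≤ 1 := pow_le_one₀ hq0 hq1.le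
        nlinarith
      · refine ⟨1, by simp only [mem_range]; omega, ?_⟩
        have h1 : (1-p)^1 < 1 := by simpa using hq1
        have h2 : (1-p)^(n₂-1-1) < 1 := pow_lt_one₀ hq0 hq1 (by omega)
        nlinarith
    have hnp : 0 < (n₂:ℝ) * p := by positivity
    by_contra hcon
    push_neg at hcon
    nlinarith [mul_pos hp0 hsum, mul_nonneg hnp.le (neg_nonneg.mpr hcon)]
  have hchoose3 : 0 < n₂.choose 3 := Nat.choose_pos (by omega)
  have hC3ne : (n₂.choose 3 : ℝ) ≠ 0 := by
    exact_mod_cast hchoose3.ne'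
  have hC3 : (n₂:ℝ) * (1/3 * ((n₂-1).choose 2 : ℝ)) = (n₂.choose 3 : ℝ) := by
    have hnat : ((n₂-1)+1) * (n₂-1).choose 2 = ((n₂-1)+1).choose 3 * 3 :=
      Nat.add_one_mul_choose_eq (n₂-1) 2
    have hm : (n₂-1)+1 = n₂ := by omega
    rw [hm] at hnat
    have hc := congrArg (Nat.cast : ℕ → ℝ) hnat
    push_cast at hc
    linarith
  have key : Tendsto (fun p : ℝ => (n₂ : ℝ) * p * Psi p n₂ / (p ^ 3 * (n₂.choose 3 : ℝ)))
      (nhdsWithin 0 (Set.Ioi 0)) (nhds 1) := by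
    have hc : Continuous fun p : ℝ =>
        (n₂:ℝ) * (1/3 * ((n₂-1).choose 2:ℝ) + p * h p) / (n₂.choose 3 : ℝ) := by
      fun_prop
    have hval : (n₂:ℝ) * (1/3 * ((n₂-1).choose 2:ℝ) + 0 * h 0) / (n₂.choose 3 : ℝ) = 1 := by
      rw [zero_mul, add_zero, hC3, div_self hC3ne]
    have hg := ((hc.tendsto' 0 1 hval).mono_left
      (nhdsWithin_le_nhds (s := Set.Ioi (0:ℝ))))
    refine Tendsto.congr' ?_ hg
    filter_upwards [self_mem_nhdsWithin] with p hp
    have hp0 : (0:ℝ) < p := hp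
    have hp3 : p^3 ≠ 0 := by positivity
    rw [hfactor p]
    field_simp
  refine ⟨pos, ?_, key, ?_⟩
  · -- BigO
    have h1 : (fun p:ℝ => Psi p n₂ - 1/3 * ((n₂-1).choose 2 : ℝ) * p^2)
        = fun p => p^3 * h p := by
      funext p; rw [hfactor p]; ring
    rw [h1]
    have hOh : h =O[nhdsWithin 0 (Set.Ioi 0)] (fun _ => (1:ℝ)) :=
      ((hcont.tendsto 0).mono_left nhdsWithin_le_nhds).isBigO_one ℝ
    simpa using (Asymptotics.isBigO_refl (fun p:ℝ => p^3) (nhdsWithin 0 (Set.Ioi 0))).mul hOh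
  · -- fourth limit
    have e1 : ((n₂ - 1 : ℕ) : ℝ) = (n₂:ℝ) - 1 := by
      have : 1 ≤ n₂ := by omega
      rw [Nat.cast_sub this, Nat.cast_one]
    have e2 := Nat.cast_choose_two (K := ℝ) (n₂ - 1)
    rw [e2, e1] at hC3
    have hC3r : (n₂.choose 3 : ℝ) = (n₂:ℝ) * ((n₂:ℝ) - 1) * ((n₂:ℝ) - 2) / 6 := by
      linear_combination -hC3
    have hfun : (fun p : ℝ => (n₂ : ℝ) * p * Psi p n₂
          / (p ^ 3 * ((n₂ : ℝ) * ((n₂ : ℝ) - 1) * ((n₂ : ℝ) - 2) / 6)))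
        = fun p : ℝ => (n₂ : ℝ) * p * Psi p n₂ / (p ^ 3 * (n₂.choose 3 : ℝ)) := by
      funext p; rw [hC3r]
    rw [hfun]
    exact key
end
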